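/- Let f = a_0 + a_1 z + ... + a_n z^n ∈ ℤ[z] be a primitive polynomial of degree n with a_0·a_n ≠ 0, and let Δ be a positive integer with Δ ≤ n such that f has no nonconstant factor of degree less than Δ in ℤ[z]. Suppose there exist positive integers m, d, k and a prime p with p ∤ d such that m ≥ h_f + 1, (m − 1 − h_f)^Δ ≥ d, and |f(m)| = p^k · d. Then f is a product of at most min_{0 ≤ i ≤ n} { i + v_p(s_i(m)) } irreducible polynomials in ℤ[z]. In particular, if k = 1, or if p ∤ s_1(m), then f is irreducible in ℤ[z]. -/

import Mathlib

/-- The height `h_f = max_{0 ≤ i ≤ n-1} |a_i|/|a_n|` of a polynomial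
`f = a_0 + a_1 z + ⋯ + a_n z^n` of degree `n`. -/
noncomputable def height (f : Polynomial ℤ) : ℝ :=
  ⨆ i : Fin f.natDegree, (|f.coeff i| : ℝ) / |f.coeff f.natDegree|

/-- `v_p(a)` with values in `ℕ∞`, where `v_p(0) = ∞`. -/
noncomputable def intVal (p : ℕ) (a : ℤ) : ℕ∞ :=
  if a = 0 then ⊤ else (padicValInt p a : ℕ∞)

/-!
Write `f = ± g₁ ⋯ g_N` with irreducible `gⱼ`, all nonconstant because `f` is primitive. By Cauchy's
bound every complex root `α` of `f` satisfies `|α| < 1 + h_f`, so if `gⱼ` has leading coefficient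
`b` and roots `αₗ`, then `|gⱼ(m)| = |b| ∏ |m - αₗ| > (m - 1 - h_f)^{deg gⱼ} ≥ (m - 1 - h_f)^Δ ≥ d`.
As `gⱼ(m)` divides `p^k d`, this forces `p ∣ gⱼ(m)`. The Taylor expansion of `f = ± ∏ gⱼ` at `m`
is the product of those of the `gⱼ`, whose constant terms `gⱼ(m)` are all divisible by `p`; hence
`p^{N-i}` divides the `i`-th Taylor coefficient `s_i(m)`, that is `N ≤ i + v_p(s_i(m))`. Taking
`i = 0` when `k = 1`, or `i = 1` when `p ∤ s_1(m)`, gives `N ≤ 1`.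
-/

open Polynomial

theorem Multiset.pow_card_lt_prod {R : Type*} [CommSemiring R] [PartialOrder R]
    [IsStrictOrderedRing R] {s : Multiset R} {c : R} (hc : 0 ≤ c) (hs : s ≠ 0)
    (h : ∀ x ∈ s, c < x) : c ^ card s < s.prod := by
  induction s using Multiset.induction with
  | empty => exact absurd rfl hs
  | cons a t ih =>
    have hca : c < a := h a (mem_cons_self a t)
    rw [prod_cons, card_cons, pow_succ']
    rcases eq_or_ne t 0 with rfl | ht
    · simpa using hca
    · exact mul_lt_mul'' hca (ih ht fun x hx => h x (mem_cons_of_mem hx)) hc (pow_nonneg hc _)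

theorem Polynomial.pow_card_sub_dvd_coeff_prod {R : Type*} [CommSemiring R] (a : R)
    (S : Multiset R[X]) (h : ∀ g ∈ S, a ∣ g.coeff 0) (i : ℕ) :
    a ^ (Multiset.card S - i) ∣ S.prod.coeff i := by
  induction S using Multiset.induction generalizing i with
  | empty => simp
  | cons g T ih =>
    rw [Multiset.prod_cons, coeff_mul, Multiset.card_cons]
    refine Finset.dvd_sum fun x hx => ?_
    rw [Finset.HasAntidiagonal.mem_antidiagonal] at hx
    have hT := ih (fun g hg => h g (Multiset.mem_cons_of_mem hg)) x.2
    rcases Nat.eq_zero_or_pos x.1 with h0 | hpos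
    · rw [h0] at hx ⊢
      exact (pow_dvd_pow a (by omega)).trans
        (pow_succ' a _ ▸ mul_dvd_mul (h g (Multiset.mem_cons_self g T)) hT)
    · exact (pow_dvd_pow a (by omega)).trans (hT.mul_left _)

theorem Polynomial.pow_card_sub_dvd_hasseDeriv_eval_C_mul_prod {R : Type*} [CommSemiring R]
    (a r c : R) (S : Multiset R[X]) (h : ∀ g ∈ S, a ∣ g.eval r) (i : ℕ) :
    a ^ (Multiset.card S - i) ∣ (hasseDeriv i (C c * S.prod)).eval r := by
  rw [← taylor_coeff, taylor_mul, taylor_C, coeff_C_mul, ← taylorAlgHom_apply, map_multiset_prod,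
    ← Multiset.card_map (taylorAlgHom r)]
  refine dvd_mul_of_dvd_right (pow_card_sub_dvd_coeff_prod a _ (fun G hG => ?_) i) c
  obtain ⟨g, hg, rfl⟩ := Multiset.mem_map.mp hG
  simpa using h g hg

theorem Polynomial.IsPrimitive.exists_eq_C_mul_prod {R : Type*} [CommRing R] [IsDomain R]
    [UniqueFactorizationMonoid R] {f : R[X]} (hf : f.IsPrimitive) :
    ∃ (u : Rˣ) (gs : Multiset R[X]),
      (∀ g ∈ gs, 0 < g.natDegree ∧ Irreducible g) ∧ f = C (u : R) * gs.prod := by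
  obtain ⟨w, hw⟩ := UniqueFactorizationMonoid.factors_prod hf.ne_zero
  obtain ⟨r, hr, hrw⟩ := Polynomial.isUnit_iff.mp w.isUnit
  refine ⟨hr.unit, UniqueFactorizationMonoid.factors f, fun g hg => ?_, ?_⟩
  · have hirr := UniqueFactorizationMonoid.irreducible_of_factor g hg
    refine ⟨Nat.pos_of_ne_zero fun h0 => hirr.not_isUnit ?_, hirr⟩
    rw [eq_C_of_natDegree_eq_zero h0] at hg ⊢
    exact isUnit_C.mpr (hf _ (UniqueFactorizationMonoid.dvd_of_mem_factors hg))
  · rw [IsUnit.unit_spec, hrw, mul_comm, hw]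

theorem irreducible_mul_prod_of_card_le_one {M : Type*} [CommMonoid M] {u : M} (hu : IsUnit u)
    {gs : Multiset M} (hirr : ∀ g ∈ gs, Irreducible g) (hcard : Multiset.card gs ≤ 1)
    (hnu : ¬ IsUnit (u * gs.prod)) : Irreducible (u * gs.prod) := by
  rcases Nat.le_one_iff_eq_zero_or_eq_one.mp hcard with h0 | h1
  · rw [Multiset.card_eq_zero.mp h0, Multiset.prod_zero, mul_one] at hnu
    exact absurd hu hnu
  · obtain ⟨g, rfl⟩ := Multiset.card_eq_one.mp h1
    rw [Multiset.prod_singleton, irreducible_isUnit_mul hu]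
    exact hirr g (Multiset.mem_singleton_self g)

theorem Polynomial.norm_leadingCoeff_mul_pow_lt_norm_eval {K : Type*} [NormedField K]
    [IsAlgClosed K] {G : K[X]} (hG : 0 < G.natDegree) {z : K} {c : ℝ} (hc : 0 ≤ c)
    (h : ∀ α ∈ G.roots, c < ‖z - α‖) : ‖G.leadingCoeff‖ * c ^ G.natDegree < ‖G.eval z‖ := by
  have hroots : Multiset.card G.roots = G.natDegree := IsAlgClosed.card_roots_eq_natDegree
  conv_rhs => rw [← C_leadingCoeff_mul_prod_multiset_X_sub_C hroots]
  have norm_prod (s : Multiset K) : ‖s.prod‖ = (s.map (‖·‖)).prod := map_multiset_prod normHom s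
  rw [eval_mul, eval_C, eval_multiset_prod, norm_mul, Multiset.map_map, norm_prod,
    Multiset.map_map]
  simp only [Function.comp_def, eval_sub, eval_X, eval_C]
  refine mul_lt_mul_of_pos_left ?_ (by simpa using ne_zero_of_natDegree_gt hG)
  rw [← hroots, ← Multiset.card_map (fun α => ‖z - α‖)]
  exact Multiset.pow_card_lt_prod hc (Multiset.card_pos.mp (by rwa [Multiset.card_map, hroots]))
    (Multiset.forall_mem_map_iff.mpr h)

lemma height_nonneg (f : ℤ[X]) : 0 ≤ height f :=
  Real.iSup_nonneg fun _ => by positivity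

lemma abs_coeff_div_le_height (f : ℤ[X]) {i : ℕ} (hi : i < f.natDegree) :
    (|f.coeff i| : ℝ) / |f.leadingCoeff| ≤ height f :=
  le_ciSup (f := fun i : Fin f.natDegree => (|f.coeff i| : ℝ) / |f.coeff f.natDegree|)
    (Set.finite_range _).bddAbove ⟨i, hi⟩

lemma cauchyBound_map_le_height_add_one (f : ℤ[X]) :
    (cauchyBound (f.map (Int.castRingHom ℂ)) : ℝ) ≤ height f + 1 := by
  rw [cauchyBound, NNReal.finset_sup_div, NNReal.coe_add, NNReal.coe_one, add_le_add_iff_right]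
  have hinj : Function.Injective (Int.castRingHom ℂ) := RingHom.injective_int _
  suffices h : _ ≤ (height f).toNNReal by
    simpa [Real.coe_toNNReal _ (height_nonneg f)] using NNReal.coe_le_coe.mpr h
  refine Finset.sup_le fun i hi => (Real.le_toNNReal_iff_coe_le (height_nonneg f)).mpr ?_
  rw [natDegree_map_eq_of_injective hinj, Finset.mem_range] at hi
  rw [NNReal.coe_div, coe_nnnorm, coe_nnnorm, leadingCoeff_map_of_injective hinj]
  simpa [Int.norm_eq_abs] using abs_coeff_div_le_height f hi

lemma pow_natDegree_lt_abs_eval_of_dvd {f g : ℤ[X]} (hf : f ≠ 0) (hgf : g ∣ f)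
    (hg : 0 < g.natDegree) {m : ℤ} (hc : 0 ≤ (m : ℝ) - 1 - height f) :
    ((m : ℝ) - 1 - height f) ^ g.natDegree < |((g.eval m : ℤ) : ℝ)| := by
  have hinj : Function.Injective (Int.castRingHom ℂ) := RingHom.injective_int _
  set G := g.map (Int.castRingHom ℂ)
  have hGdeg : G.natDegree = g.natDegree := natDegree_map_eq_of_injective hinj g
  have hlead : 1 ≤ ‖G.leadingCoeff‖ := by
    rw [leadingCoeff_map_of_injective hinj, eq_intCast, Complex.norm_intCast, ← Int.cast_abs]
    exact_mod_cast Int.one_le_abs (leadingCoeff_ne_zero.mpr (ne_zero_of_natDegree_gt hg))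
  have hroots : ∀ α ∈ G.roots, (m : ℝ) - 1 - height f < ‖(m : ℂ) - α‖ := by
    intro α hα
    have hfα : (f.map (Int.castRingHom ℂ)).IsRoot α :=
      (isRoot_of_mem_roots hα).dvd (Polynomial.map_dvd _ hgf)
    have hα_lt := hfα.norm_lt_cauchyBound ((Polynomial.map_ne_zero_iff hinj).mpr hf)
    have hcauchy := cauchyBound_map_le_height_add_one f
    have htri := norm_sub_norm_le (m : ℂ) α
    rw [Complex.norm_intCast] at htri
    rw [← NNReal.coe_lt_coe, coe_nnnorm] at hα_lt
    linarith [le_abs_self (m : ℝ)]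
  have key := norm_leadingCoeff_mul_pow_lt_norm_eval (hGdeg ▸ hg) hc hroots
  rw [hGdeg, eval_intCast_map, eq_intCast, Complex.norm_intCast] at key
  exact (le_mul_of_one_le_left (pow_nonneg hc _) hlead).trans_lt key

lemma prime_dvd_eval_of_dvd {f g : ℤ[X]} (hf : f ≠ 0) (hgf : g ∣ f) (hg : 0 < g.natDegree)
    {p k d : ℕ} (hp : p.Prime) (hd : 0 < d) {m : ℤ} (hfm : (f.eval m).natAbs = p ^ k * d)
    (hc : 0 ≤ (m : ℝ) - 1 - height f) (hdg : (d : ℝ) ≤ ((m : ℝ) - 1 - height f) ^ g.natDegree) :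
    (p : ℤ) ∣ g.eval m := by
  by_contra hpg
  have hcop : Nat.Coprime (g.eval m).natAbs (p ^ k) :=
    (hp.coprime_iff_not_dvd.mpr (Int.natCast_dvd.not.mp hpg)).symm.pow_right k
  have hdvd : (g.eval m).natAbs ∣ p ^ k * d := hfm ▸ Int.natAbs_dvd_natAbs.mpr (eval_dvd hgf)
  have hle : ((g.eval m).natAbs : ℝ) ≤ d := by
    exact_mod_cast Nat.le_of_dvd hd (hcop.dvd_of_dvd_mul_left hdvd)
  have hlt := pow_natDegree_lt_abs_eval_of_dvd hf hgf hg hc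
  rw [Nat.cast_natAbs, Int.cast_abs] at hle
  linarith

lemma le_intVal_of_pow_dvd {p : ℕ} [Fact p.Prime] {a : ℕ} {x : ℤ} (h : (p : ℤ) ^ a ∣ x) :
    (a : ℕ∞) ≤ intVal p x := by
  unfold intVal
  split_ifs with hx
  · exact le_top
  · exact_mod_cast ((padicValInt_dvd_iff a x).mp h).resolve_left hx

lemma intVal_eq_of_natAbs_eq {p k d : ℕ} [hp : Fact p.Prime] (hpd : ¬ p ∣ d) {x : ℤ}
    (hx : x.natAbs = p ^ k * d) : intVal p x = k := by
  have hd : d ≠ 0 := fun h => hpd (h ▸ dvd_zero p)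
  have hx0 : x ≠ 0 := fun h => by simp [h, hp.out.ne_zero, hd] at hx
  rw [intVal, if_neg hx0, padicValInt, hx, padicValNat.mul (pow_ne_zero k hp.out.ne_zero) hd,
    padicValNat.prime_pow, padicValNat.eq_zero_of_not_dvd hpd, add_zero]

lemma intVal_eq_zero_of_not_dvd {p : ℕ} {x : ℤ} (h : ¬ (p : ℤ) ∣ x) : intVal p x = 0 := by
  have hx0 : x ≠ 0 := fun hx => h (hx ▸ dvd_zero _)
  rw [intVal, if_neg hx0, padicValInt.eq_zero_of_not_dvd h, Nat.cast_zero]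

lemma card_le_add_intVal_hasseDeriv_eval {p : ℕ} [Fact p.Prime] {m : ℤ} (c : ℤ)
    {gs : Multiset ℤ[X]} (hgs : ∀ g ∈ gs, (p : ℤ) ∣ g.eval m) (i : ℕ) :
    (Multiset.card gs : ℕ∞) ≤ i + intVal p ((hasseDeriv i (C c * gs.prod)).eval m) :=
  calc (Multiset.card gs : ℕ∞) ≤ i + (Multiset.card gs - i : ℕ) := by norm_cast; omega
    _ ≤ _ := add_le_add_right
      (le_intVal_of_pow_dvd (pow_card_sub_dvd_hasseDeriv_eval_C_mul_prod _ m c gs hgs i)) _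

lemma inf_add_intVal_hasseDeriv_eval_le_one {p k d n : ℕ} [Fact p.Prime] {f : ℤ[X]} {m : ℤ}
    (hn : 0 < n) (hpd : ¬ p ∣ d) (hfm : (f.eval m).natAbs = p ^ k * d)
    (hcase : k = 1 ∨ ¬ (p : ℤ) ∣ (hasseDeriv 1 f).eval m) :
    (Finset.range (n + 1)).inf (fun i => (i : ℕ∞) + intVal p ((hasseDeriv i f).eval m)) ≤ 1 := by
  rcases hcase with rfl | hs1
  · refine (Finset.inf_le (Finset.mem_range.mpr n.succ_pos)).trans ?_
    simp [hasseDeriv_zero, intVal_eq_of_natAbs_eq hpd hfm]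
  · refine (Finset.inf_le (Finset.mem_range.mpr (by omega : 1 < n + 1))).trans ?_
    rw [intVal_eq_zero_of_not_dvd hs1, Nat.cast_one, add_zero]

theorem statement3_general
    (f : Polynomial ℤ) (n : ℕ) (hdeg : f.natDegree = n)
    (hprim : f.IsPrimitive)
    (Δ : ℕ) (hΔ0 : 0 < Δ) (hΔn : Δ ≤ n)
    (hΔ : ∀ g : Polynomial ℤ, g ∣ f → 0 < g.natDegree → Δ ≤ g.natDegree)
    (m d k : ℕ) (hd : 0 < d)
    (p : ℕ) (hp : Nat.Prime p) (hpd : ¬ p ∣ d)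
    (hm1 : height f + 1 ≤ (m : ℝ))
    (hm2 : (d : ℝ) ≤ ((m : ℝ) - 1 - height f) ^ Δ)
    (hfm : (f.eval (m : ℤ)).natAbs = p ^ k * d) :
    (∃ (u : ℤˣ) (gs : Multiset (Polynomial ℤ)),
      (Multiset.card gs : ℕ∞) ≤
        (Finset.range (n + 1)).inf
          (fun i => (i : ℕ∞) + intVal p ((Polynomial.hasseDeriv i f).eval (m : ℤ))) ∧
      (∀ g ∈ gs, 0 < g.natDegree ∧ Irreducible g) ∧
      f = Polynomial.C (u : ℤ) * gs.prod) ∧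
    ((k = 1 ∨ ¬ ((p : ℤ) ∣ (Polynomial.hasseDeriv 1 f).eval (m : ℤ))) →
      Irreducible f) := by
  have : Fact p.Prime := ⟨hp⟩
  have hn : 0 < n := hΔ0.trans_le hΔn
  set c := (m : ℝ) - 1 - height f
  have hc : 1 ≤ c := (one_le_pow_iff_of_nonneg (by linarith) hΔ0.ne').mp
    (le_trans (by exact_mod_cast hd) hm2)
  obtain ⟨u, gs, hirr, hf⟩ := hprim.exists_eq_C_mul_prod
  have hpg (g) (hg : g ∈ gs) : (p : ℤ) ∣ g.eval (m : ℤ) := by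
    have hgf : g ∣ f := hf ▸ dvd_mul_of_dvd_right (Multiset.dvd_prod hg) _
    refine prime_dvd_eval_of_dvd hprim.ne_zero hgf (hirr g hg).1 hp hd hfm
      (by push_cast; linarith) ?_
    push_cast
    exact hm2.trans (pow_le_pow_right₀ hc (hΔ g hgf (hirr g hg).1))
  have hcard := Finset.le_inf (s := Finset.range (n + 1)) fun i _ =>
    hf ▸ card_le_add_intVal_hasseDeriv_eval u hpg i
  refine ⟨⟨u, gs, hcard, hirr, hf⟩, fun hcase => ?_⟩
  have hN : Multiset.card gs ≤ 1 := by
    exact_mod_cast hcard.trans (inf_add_intVal_hasseDeriv_eval_le_one hn hpd hfm hcase)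
  rw [hf] at hdeg ⊢
  exact irreducible_mul_prod_of_card_le_one (isUnit_C.mpr u.isUnit) (fun g hg => (hirr g hg).2)
    hN fun hu => hn.ne' (hdeg ▸ natDegree_eq_zero_of_isUnit hu)

/-- Theorem 4: let `f` be primitive of degree `n` with `a_0 a_n ≠ 0`, and let
`Δ ≤ n` be a positive integer such that `f` has no nonconstant factor of degree
less than `Δ` in `ℤ[z]`. If there are positive integers `m, d, k` and a prime
`p ∤ d` with `m ≥ h_f + 1`, `(m - 1 - h_f)^Δ ≥ d` and `|f(m)| = p^k d`, then `f` is a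
product of at most `min_{0 ≤ i ≤ n} {i + v_p(s_i(m))}` irreducible polynomials in
`ℤ[z]` (with `s_i = f^{(i)}/i!` and `v_p(0) = ∞`); in particular, if `k = 1` or
`p ∤ s_1(m)`, then `f` is irreducible. -/
theorem statement3
    (f : Polynomial ℤ) (n : ℕ) (hdeg : f.natDegree = n)
    (ha : f.coeff 0 * f.coeff n ≠ 0) (hprim : f.IsPrimitive)
    (Δ : ℕ) (hΔ0 : 0 < Δ) (hΔn : Δ ≤ n)
    (hΔ : ∀ g : Polynomial ℤ, g ∣ f → 0 < g.natDegree → Δ ≤ g.natDegree)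
    (m d k : ℕ) (hm : 0 < m) (hd : 0 < d) (hk : 0 < k)
    (p : ℕ) (hp : Nat.Prime p) (hpd : ¬ p ∣ d)
    (hm1 : height f + 1 ≤ (m : ℝ))
    (hm2 : (d : ℝ) ≤ ((m : ℝ) - 1 - height f) ^ Δ)
    (hfm : (f.eval (m : ℤ)).natAbs = p ^ k * d) :
    (∃ (u : ℤˣ) (gs : Multiset (Polynomial ℤ)),
      (Multiset.card gs : ℕ∞) ≤
        (Finset.range (n + 1)).inf
          (fun i => (i : ℕ∞) + intVal p ((Polynomial.hasseDeriv i f).eval (m : ℤ))) ∧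
      (∀ g ∈ gs, 0 < g.natDegree ∧ Irreducible g) ∧
      f = Polynomial.C (u : ℤ) * gs.prod) ∧
    ((k = 1 ∨ ¬ ((p : ℤ) ∣ (Polynomial.hasseDeriv 1 f).eval (m : ℤ))) →
      Irreducible f) :=
  statement3_general f n hdeg hprim Δ hΔ0 hΔn hΔ m d k hd p hp hpd hm1 hm2 hfm
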